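/- For every integer q > 2, the energy of the graph G_{q²} satisfies E(G_{q²}) ≤ 2q(q−1) + 2q² = 4q² − 2q. -/

import Mathlib

/-!
`G_{q²}` is the Cartesian product `C_q □ K_q`, so its adjacency matrix is the sum of those of
`C_q □ K̄_q` (`q` disjoint `q`-cycles) and `K̄_q □ K_q` (`q` disjoint copies of `K_q`). The energy
is the trace norm of the adjacency matrix, hence subadditive: in the eigenbasis `U` of `A + B`,
`|λᵢ(A + B)| ≤ |(Uᵀ A U)ᵢᵢ| + |(Uᵀ B U)ᵢᵢ|`, and the diagonal of `Uᵀ A U` is dominated in `ℓ¹` by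
the spectrum of `A`. Every eigenvalue of the cycles is at most the maximum degree `2` in absolute
value. The cliques satisfy `A² = (q - 2) A + (q - 1) I`, so their eigenvalues are `-1` and
`q - 1`; together with `tr A = 0` this gives their energy `2q(q - 1)` exactly.
-/

/-- The adjacency matrix of a simple graph over `ℝ` is Hermitian. -/
theorem SimpleGraph.adjMatrix_isHermitian {V : Type*} [Fintype V] (G : SimpleGraph V)
    [DecidableRel G.Adj] : (G.adjMatrix ℝ).IsHermitian := by
  rw [Matrix.IsHermitian, Matrix.conjTranspose_eq_transpose_of_trivial]
  exact SimpleGraph.isSymm_adjMatrix G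

/-- The eigenvalues of the (real, symmetric) adjacency matrix of a simple graph,
indexed by the vertex set (listed with multiplicity). -/
noncomputable def SimpleGraph.adjEigenvalues {V : Type*} [Fintype V] [DecidableEq V]
    (G : SimpleGraph V) : V → ℝ :=
  letI := Classical.decRel G.Adj
  (G.adjMatrix_isHermitian).eigenvalues

/-- The energy of a simple graph: the sum of the absolute values of the
eigenvalues of its adjacency matrix. -/
noncomputable def SimpleGraph.energy {V : Type*} [Fintype V] [DecidableEq V]
    (G : SimpleGraph V) : ℝ :=
  ∑ v, |G.adjEigenvalues v|

/-- The graph `G_{q²}` : `q` disjoint copies of the complete graph `K_q`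
(the copies indexed by the first coordinate, a residue `i` mod `q`), together
with, for each label `j`, the edges of a `q`-cycle joining `v_j[i]` and
`v_j[i ± 1 mod q]`.  Thus `(i, j)` is adjacent to `(i', j')` iff
(`i = i'` and `j ≠ j'`) or (`j = j'` and `i' = i ± 1 (mod q)`). -/
def gGraph (q : ℕ) : SimpleGraph (Fin q × Fin q) :=
  SimpleGraph.fromRel fun a b =>
    (a.1 = b.1 ∧ a.2 ≠ b.2) ∨ (a.2 = b.2 ∧ (b.1 : ℕ) = ((a.1 : ℕ) + 1) % q)

instance gGraph.instDecidableRelAdj (q : ℕ) : DecidableRel (gGraph q).Adj := fun a b =>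
  decidable_of_iff _ (SimpleGraph.fromRel_adj _ a b).symm

open Matrix

namespace Matrix.IsHermitian

variable {n : Type*} [Fintype n] [DecidableEq n] {A B : Matrix n n ℝ}

theorem eigenvectorUnitary_mul_diagonal_mul_star (hA : A.IsHermitian) :
    (hA.eigenvectorUnitary : Matrix n n ℝ) * diagonal hA.eigenvalues *
      star (hA.eigenvectorUnitary : Matrix n n ℝ) = A := by
  simpa using hA.spectral_theorem.symm

theorem star_eigenvectorUnitary_mul_mul_eigenvectorUnitary (hA : A.IsHermitian) :
    star (hA.eigenvectorUnitary : Matrix n n ℝ) * A * hA.eigenvectorUnitary =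
      diagonal hA.eigenvalues := by
  simpa [Unitary.conjStarAlgAut_star_apply] using hA.conjStarAlgAut_star_eigenvectorUnitary

/-- With `W = Vᵀ U` for the eigenvector matrix `V` of `A`, `(Uᵀ A U)ᵢᵢ = ∑ⱼ λⱼ Wⱼᵢ²`, and the
rows of the orthogonal matrix `W` are unit vectors. -/
theorem sum_abs_diag_star_mul_mul_le (hA : A.IsHermitian) (U : unitaryGroup n ℝ) :
    ∑ i, |(star (U : Matrix n n ℝ) * A * U) i i| ≤ ∑ j, |hA.eigenvalues j| := by
  set W := star (hA.eigenvectorUnitary : Matrix n n ℝ) * U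
  have hconj : star (U : Matrix n n ℝ) * A * U = star W * diagonal hA.eigenvalues * W := by
    conv_lhs => rw [← hA.eigenvectorUnitary_mul_diagonal_mul_star]
    simp only [W, star_mul, star_star, Matrix.mul_assoc]
  have hrow : ∀ j, ∑ i, W j i ^ 2 = 1 := fun j => by
    have hW : W * star W = 1 := by
      simp [W, Matrix.mul_assoc, ← Matrix.mul_assoc (U : Matrix n n ℝ)]
    simpa [Matrix.mul_apply, sq] using congr_fun₂ hW j j
  calc ∑ i, |(star (U : Matrix n n ℝ) * A * U) i i|
      = ∑ i, |∑ j, hA.eigenvalues j * W j i ^ 2| := by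
        rw [hconj]
        simp only [Matrix.mul_apply (M := _ * diagonal _), mul_diagonal, star_apply, star_trivial]
        congr! 3 with i - j -
        ring
    _ ≤ ∑ i, ∑ j, |hA.eigenvalues j| * W j i ^ 2 := by
        gcongr with i
        refine (Finset.abs_sum_le_sum_abs _ _).trans_eq ?_
        simp [abs_mul]
    _ = ∑ j, |hA.eigenvalues j| := by
        simp [Finset.sum_comm (γ := n), ← Finset.mul_sum, hrow]

theorem sum_abs_eigenvalues_add_le (hA : A.IsHermitian) (hB : B.IsHermitian) :
    ∑ i, |(hA.add hB).eigenvalues i| ≤ ∑ i, |hA.eigenvalues i| + ∑ i, |hB.eigenvalues i| := by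
  set U := (hA.add hB).eigenvectorUnitary
  calc ∑ i, |(hA.add hB).eigenvalues i|
      = ∑ i, |(star (U : Matrix n n ℝ) * A * U) i i + (star (U : Matrix n n ℝ) * B * U) i i| := by
        simp [U, ← Matrix.add_apply, ← Matrix.add_mul, ← Matrix.mul_add,
          (hA.add hB).star_eigenvectorUnitary_mul_mul_eigenvectorUnitary]
    _ ≤ ∑ i, (|(star (U : Matrix n n ℝ) * A * U) i i| +
          |(star (U : Matrix n n ℝ) * B * U) i i|) :=
        Finset.sum_le_sum fun i _ => abs_add_le _ _
    _ ≤ _ := by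
        rw [Finset.sum_add_distrib]
        exact add_le_add (hA.sum_abs_diag_star_mul_mul_le U) (hB.sum_abs_diag_star_mul_mul_le U)

section LinftyOpNorm

attribute [local instance] Matrix.linftyOpNormedRing Matrix.linftyOpNormedAlgebra

theorem abs_eigenvalues_le (hA : A.IsHermitian) {r : ℝ} (hr : ∀ i, ∑ j, |A i j| ≤ r) (i : n) :
    |hA.eigenvalues i| ≤ r := by
  have : Nonempty n := ⟨i⟩
  obtain ⟨k, -, hk⟩ := Finset.exists_mem_eq_sup _ Finset.univ_nonempty fun i => ∑ j, ‖A i j‖₊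
  calc |hA.eigenvalues i| = ‖hA.eigenvalues i‖ := rfl
    _ ≤ ‖A‖ := spectrum.norm_le_norm_of_mem (hA.eigenvalues_mem_spectrum_real i)
    _ ≤ r := by simpa [Matrix.linfty_opNorm_def, hk] using hr k

end LinftyOpNorm

theorem eigenvalues_eq_neg_one_or_eq (hA : A.IsHermitian) {d : ℝ}
    (h : A * A = (d - 1) • A + d • 1) (i : n) :
    hA.eigenvalues i = -1 ∨ hA.eigenvalues i = d := by
  set v := ⇑(hA.eigenvectorBasis i)
  have hv : v ≠ 0 := (WithLp.ofLp_eq_zero 2).ne.2 <| hA.eigenvectorBasis.orthonormal.ne_zero i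
  have hAv : A *ᵥ v = hA.eigenvalues i • v := hA.mulVec_eigenvectorBasis i
  have key : ((hA.eigenvalues i + 1) * (hA.eigenvalues i - d)) • v = 0 := by
    have := congr_arg (· *ᵥ v) h
    simp only [← mulVec_mulVec, hAv, mulVec_smul, add_mulVec, smul_mulVec, one_mulVec,
      smul_smul] at this
    linear_combination (norm := module) this
  rcases mul_eq_zero.1 ((smul_eq_zero.1 key).resolve_right hv) with h | h
  · exact Or.inl (by linarith)
  · exact Or.inr (by linarith)

/-- On `{-1, d}`, `|λ|` is the affine function `((d - 1) λ + 2d) / (d + 1)`, and `∑ λ = tr A`. -/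
theorem mul_sum_abs_eigenvalues_eq (hA : A.IsHermitian) {d : ℝ} (hd : 0 ≤ d)
    (h : A * A = (d - 1) • A + d • 1) (htr : A.trace = 0) :
    (d + 1) * ∑ i, |hA.eigenvalues i| = 2 * d * Fintype.card n := by
  have habs : ∀ i, (d + 1) * |hA.eigenvalues i| = (d - 1) * hA.eigenvalues i + 2 * d := by
    intro i
    rcases hA.eigenvalues_eq_neg_one_or_eq h i with h | h <;> rw [h]
    · rw [abs_of_neg (by norm_num)]; ring
    · rw [abs_of_nonneg hd]; ring
  have hsum : ∑ i, hA.eigenvalues i = 0 := by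
    simpa [htr] using (hA.trace_eq_sum_eigenvalues (𝕜 := ℝ)).symm
  rw [Finset.mul_sum, Finset.sum_congr rfl fun i _ => habs i, Finset.sum_add_distrib,
    ← Finset.mul_sum, hsum, Finset.sum_const, Finset.card_univ, nsmul_eq_mul]
  ring

end Matrix.IsHermitian

open scoped Kronecker

namespace SimpleGraph

variable {V α β : Type*} [Fintype V] [DecidableEq V]

theorem energy_eq_sum_abs_eigenvalues (G : SimpleGraph V) [DecidableRel G.Adj] :
    G.energy = ∑ v, |G.adjMatrix_isHermitian.eigenvalues v| := by
  unfold energy adjEigenvalues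
  congr!

theorem energy_le_card_mul_maxDegree (G : SimpleGraph V) [DecidableRel G.Adj] :
    G.energy ≤ Fintype.card V * G.maxDegree := by
  have hrow : ∀ u, ∑ v, |G.adjMatrix ℝ u v| = G.degree u := fun u => by
    simp [adjMatrix_apply, apply_ite, Finset.sum_boole, ← card_neighborFinset_eq_degree,
      neighborFinset_eq_filter]
  rw [energy_eq_sum_abs_eigenvalues]
  refine (Finset.sum_le_sum fun v _ => G.adjMatrix_isHermitian.abs_eigenvalues_le
    (r := G.maxDegree) (fun u => ?_) v).trans_eq (by simp)
  rw [hrow]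
  exact_mod_cast G.degree_le_maxDegree u

instance boxProd.instDecidableRelAdj [DecidableEq α] [DecidableEq β] (G : SimpleGraph α)
    (H : SimpleGraph β) [DecidableRel G.Adj] [DecidableRel H.Adj] : DecidableRel (G □ H).Adj :=
  fun _ _ => inferInstanceAs (Decidable (_ ∨ _))

theorem adjMatrix_boxProd {R : Type*} [NonAssocSemiring R] [DecidableEq α] [DecidableEq β]
    (G : SimpleGraph α) (H : SimpleGraph β) [DecidableRel G.Adj] [DecidableRel H.Adj] :
    (G □ H).adjMatrix R = G.adjMatrix R ⊗ₖ 1 + 1 ⊗ₖ H.adjMatrix R := by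
  ext ⟨a, b⟩ ⟨a', b'⟩
  by_cases ha : a = a' <;> by_cases hb : b = b' <;> simp [ha, hb]

theorem degree_boxProd_bot [Fintype β] (G : SimpleGraph α) (x : α × β)
    [Fintype (G.neighborSet x.1)] [Fintype ((G □ (⊥ : SimpleGraph β)).neighborSet x)] :
    (G □ (⊥ : SimpleGraph β)).degree x = G.degree x.1 := by
  rw [degree_boxProd, bot_degree, add_zero]

theorem energy_boxProd_le [Fintype α] [Fintype β] [DecidableEq α] [DecidableEq β]
    (G : SimpleGraph α) (H : SimpleGraph β) :
    (G □ H).energy ≤ (G □ (⊥ : SimpleGraph β)).energy + ((⊥ : SimpleGraph α) □ H).energy := by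
  classical
  have hsum : (G □ H).adjMatrix ℝ = (G □ ⊥).adjMatrix ℝ + (⊥ □ H).adjMatrix ℝ := by
    simp [adjMatrix_boxProd]
  simp only [energy_eq_sum_abs_eigenvalues, hsum]
  exact (adjMatrix_isHermitian _).sum_abs_eigenvalues_add_le (adjMatrix_isHermitian _)

theorem adjMatrix_completeGraph_mul_self [Fintype β] [DecidableEq β] :
    (completeGraph β).adjMatrix ℝ * (completeGraph β).adjMatrix ℝ =
      ((Fintype.card β : ℝ) - 2) • (completeGraph β).adjMatrix ℝ +
        ((Fintype.card β : ℝ) - 1) • 1 := by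
  rw [adjMatrix_completeGraph_eq_of_one_sub_one]
  ext i j
  by_cases h : i = j <;> simp [h, mul_sub, Matrix.mul_apply, Matrix.one_apply]; ring

theorem energy_bot_boxProd_completeGraph [Fintype α] [Fintype β] [DecidableEq α]
    [DecidableEq β] [Nonempty β] :
    ((⊥ : SimpleGraph α) □ completeGraph β).energy =
      2 * Fintype.card α * ((Fintype.card β : ℝ) - 1) := by
  set A := ((⊥ : SimpleGraph α) □ completeGraph β).adjMatrix ℝ
  have hA : A = 1 ⊗ₖ (completeGraph β).adjMatrix ℝ := by simp [A, adjMatrix_boxProd]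
  have hsq : A * A = ((Fintype.card β - 1 : ℝ) - 1) • A + (Fintype.card β - 1 : ℝ) • 1 := by
    rw [hA, ← Matrix.mul_kronecker_mul, Matrix.one_mul, adjMatrix_completeGraph_mul_self,
      Matrix.kronecker_add, Matrix.kronecker_smul, Matrix.kronecker_smul,
      Matrix.one_kronecker_one]
    congr 2
    ring
  have hcard : (1 : ℝ) ≤ Fintype.card β := by exact_mod_cast Fintype.card_pos
  have key := (adjMatrix_isHermitian _).mul_sum_abs_eigenvalues_eq (by linarith) hsq
    (trace_adjMatrix ℝ _)
  rw [sub_add_cancel, Fintype.card_prod, Nat.cast_mul] at key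
  rw [energy_eq_sum_abs_eigenvalues]
  apply mul_left_cancel₀ (by positivity : (Fintype.card β : ℝ) ≠ 0)
  rw [key]
  ring

end SimpleGraph

open SimpleGraph

theorem gGraph_eq_boxProd {q : ℕ} (hq : 2 ≤ q) :
    gGraph q = cycleGraph q □ completeGraph (Fin q) := by
  obtain ⟨n, rfl⟩ : ∃ n, q = n + 2 := ⟨q - 2, by omega⟩
  ext ⟨a, b⟩ ⟨a', b'⟩
  have hsucc : ∀ x y : Fin (n + 2), (y : ℕ) = ((x : ℕ) + 1) % (n + 2) ↔ y - x = 1 := by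
    intro x y
    rw [sub_eq_iff_eq_add', Fin.ext_iff, Fin.val_add, Fin.val_one]
  simp only [gGraph, fromRel_adj, boxProd_adj, cycleGraph_adj, top_adj, hsucc]
  by_cases ha : a = a' <;> by_cases hb : b = b' <;> simp [ha, hb, eq_comm, or_comm]

/-- For every integer `q > 2`, the energy of `G_{q²}` satisfies
`E(G_{q²}) ≤ 2q(q-1) + 2q² = 4q² - 2q`. -/
theorem energy_gGraph_le (q : ℕ) (hq : 2 < q) :
    (gGraph q).energy ≤ 2 * (q : ℝ) * ((q : ℝ) - 1) + 2 * (q : ℝ) ^ 2 ∧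
    2 * (q : ℝ) * ((q : ℝ) - 1) + 2 * (q : ℝ) ^ 2 = 4 * (q : ℝ) ^ 2 - 2 * (q : ℝ) := by
  refine ⟨?_, by ring⟩
  obtain ⟨n, rfl⟩ : ∃ n, q = n + 3 := ⟨q - 3, by omega⟩
  have hcycles : (cycleGraph (n + 3) □ (⊥ : SimpleGraph (Fin (n + 3)))).maxDegree ≤ 2 :=
    maxDegree_le_of_forall_degree_le _ _ fun x => by
      rw [degree_boxProd_bot, cycleGraph_degree_three_le]
  rw [gGraph_eq_boxProd (by omega)]
  calc _ ≤ _ := energy_boxProd_le _ _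
    _ ≤ Fintype.card (Fin (n + 3) × Fin (n + 3)) * 2 + 2 * (n + 3 : ℕ) * ((n + 3 : ℕ) - 1) := by
      gcongr
      · exact (energy_le_card_mul_maxDegree _).trans (by gcongr; exact_mod_cast hcycles)
      · rw [energy_bot_boxProd_completeGraph, Fintype.card_fin]
    _ = _ := by
      rw [Fintype.card_prod, Fintype.card_fin]
      push_cast
      ring
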